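/- arXiv:1801.06872 — 2 statements merged into one kernel-verified Lean document; each statement's English description precedes it below -/
import Mathlib

section
/- Let f : ℝ → ℝ be continuous with t·f(t) > 0 for t ≠ 0 and limsup_{|t|→∞}|f(t)|/|t|^q < ∞ for some q > 1, and set r = (q+1)/q. Fix δ ∈ (0,1) and define j(t) = f(t) if |t| ≥ δ and 0 otherwise. Then there exists c > 0 such that |j(t)|^r ≤ c·t·f(t) for all t ∈ ℝ. -/
open Set

lemma rpow_add_one_div_le_of_le_mul_rpow {a b M q : ℝ} (ha : 0 ≤ a) (hb : 0 ≤ b) (hM : 0 ≤ M)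
    (hq : 0 < q) (h : a ≤ M * b ^ q) : a ^ ((q + 1) / q) ≤ M ^ (1 / q) * (b * a) := by
  have hroot : a ^ (1 / q) ≤ M ^ (1 / q) * b := by
    calc a ^ (1 / q) ≤ (M * b ^ q) ^ (1 / q) := by gcongr
      _ = M ^ (1 / q) * b := by
        rw [Real.mul_rpow hM (by positivity), ← Real.rpow_mul hb, mul_one_div_cancel hq.ne',
          Real.rpow_one]
  calc a ^ ((q + 1) / q) = a * a ^ (1 / q) := by
        rw [add_div, div_self hq.ne', Real.rpow_add' ha (by positivity), Real.rpow_one]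
    _ ≤ a * (M ^ (1 / q) * b) := by gcongr
    _ = M ^ (1 / q) * (b * a) := by ring

lemma IsCompact.exists_le_mul_of_continuousOn {X : Type*} [TopologicalSpace X] {K : Set X}
    (hK : IsCompact K) {g h : X → ℝ} (hg : ContinuousOn g K) (hh : ContinuousOn h K)
    (hpos : ∀ x ∈ K, 0 < g x) : ∃ c, ∀ x ∈ K, h x ≤ c * g x := by
  obtain ⟨c, hc⟩ := hK.bddAbove_image (hh.div hg fun x hx => (hpos x hx).ne')
  exact ⟨c, fun x hx => (div_le_iff₀ (hpos x hx)).mp (hc (mem_image_of_mem _ hx))⟩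

/-- On the compact set `δ ≤ |t| ≤ T` the quotient `|f t| ^ ((q + 1) / q) / (t * f t)` is bounded
by continuity; beyond `T` the growth bound gives `|f t| ^ (1 / q) ≤ M ^ (1 / q) * |t|`. -/
lemma exists_abs_rpow_le_mul_of_le_abs {f : ℝ → ℝ} {q δ : ℝ} (hq : 0 < q) (hδ : 0 < δ)
    (hf : Continuous f) (hsign : ∀ t : ℝ, t ≠ 0 → 0 < t * f t)
    (hinf : ∃ M T : ℝ, ∀ t : ℝ, T ≤ |t| → |f t| ≤ M * |t| ^ q) :
    ∃ c > (0 : ℝ), ∀ t : ℝ, δ ≤ |t| → |f t| ^ ((q + 1) / q) ≤ c * (t * f t) := by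
  obtain ⟨M, T, hM⟩ := hinf
  have hsign' : ∀ t, δ ≤ |t| → 0 < t * f t := fun t ht =>
    hsign t (abs_pos.mp (hδ.trans_le ht))
  have hK : IsCompact (Icc (-T) T ∩ {t | δ ≤ |t|}) :=
    isCompact_Icc.inter_right (isClosed_le continuous_const continuous_abs)
  obtain ⟨C, hC⟩ := hK.exists_le_mul_of_continuousOn (g := fun t => t * f t)
    (h := fun t => |f t| ^ ((q + 1) / q)) (continuous_id.mul hf).continuousOn
    (hf.abs.rpow_const fun _ => Or.inr (by positivity)).continuousOn fun t ht => hsign' t ht.2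
  set A := max M 0 ^ (1 / q)
  refine ⟨max 1 (max A C), lt_max_of_lt_left one_pos, fun t ht => ?_⟩
  have hpos := hsign' t ht
  rcases le_or_gt |t| T with hT | hT
  · calc |f t| ^ ((q + 1) / q) ≤ C * (t * f t) := hC t ⟨abs_le.mp hT, ht⟩
      _ ≤ max 1 (max A C) * (t * f t) := by gcongr; exact le_max_of_le_right (le_max_right _ _)
  · have hgrowth : |f t| ≤ max M 0 * |t| ^ q :=
      (hM t hT.le).trans (by gcongr; exact le_max_left _ _)
    calc |f t| ^ ((q + 1) / q) ≤ A * (|t| * |f t|) :=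
          rpow_add_one_div_le_of_le_mul_rpow (abs_nonneg _) (abs_nonneg _) (le_max_right _ _) hq
            hgrowth
      _ = A * (t * f t) := by rw [← abs_mul, abs_of_pos hpos]
      _ ≤ max 1 (max A C) * (t * f t) := by gcongr; exact le_max_of_le_right (le_max_left _ _)

/-- the tail part `j = f·(1-χ_{(-δ,δ)})` satisfies `|j(t)|^r ≤ c t f(t)`. -/
theorem stmt_2 (f : ℝ → ℝ) (q : ℝ) (hq : 1 < q)
    (hf : Continuous f)
    (hsign : ∀ t : ℝ, t ≠ 0 → 0 < t * f t)
    (hinf : ∃ M T : ℝ, 0 < T ∧ ∀ t : ℝ, T ≤ |t| → |f t| ≤ M * |t| ^ q)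
    (r : ℝ) (hr : r = (q + 1) / q)
    (δ : ℝ) (hδ : 0 < δ ∧ δ < 1)
    (j : ℝ → ℝ) (hj : ∀ t, j t = if δ ≤ |t| then f t else 0) :
    ∃ c > (0 : ℝ), ∀ t : ℝ, |j t| ^ r ≤ c * (t * f t) := by
  have hq0 : 0 < q := one_pos.trans hq
  obtain ⟨c, hc, hbound⟩ := exists_abs_rpow_le_mul_of_le_abs hq0 hδ.1 hf hsign
    (hinf.imp fun _ ⟨T, _, hT⟩ => ⟨T, hT⟩)
  have hnonneg : ∀ t, 0 ≤ t * f t := fun t => by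
    rcases eq_or_ne t 0 with rfl | ht
    · simp
    · exact (hsign t ht).le
  subst hr
  refine ⟨c, hc, fun t => ?_⟩
  rw [hj t]
  split_ifs with ht
  · exact hbound t ht
  · rw [abs_zero, Real.zero_rpow (by positivity)]
    exact mul_nonneg hc.le (hnonneg t)
end

section
/- Let f : ℝ → ℝ be continuous with t ↦ f(t)/t increasing on (0,∞) and decreasing on (−∞,0), and let F(t) = ∫₀ᵗ f(s) ds. Then the map t ↦ (1/2) f(t) t − F(t) is nonnegative and nondecreasing in |t|; in particular (1/2) f(t) t − F(t) ≥ 0 for all t. -/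
/-!
Write `Φ(t) = f(t) t / 2 - F(t)`. For `0 ≤ s ≤ t` and `c = f(t) / t`, monotonicity of `f(u) / u`
gives `f(u) ≤ c u` on `(0, t]`, hence `∫ₛᵗ f ≤ c (t² - s²) / 2` and `f(s) s ≤ c s²`; together with
`f(t) t = c t²` this is `Φ(s) ≤ Φ(t)`. The case `t ≤ s ≤ 0` is the same statement for the
reflected function `u ↦ -f(-u)`, and nonnegativity follows from `Φ(0) = 0`.
-/

open Set MeasureTheory intervalIntegral

noncomputable def halfMulSubIntegral (f : ℝ → ℝ) (t : ℝ) : ℝ :=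
  1 / 2 * (f t * t) - ∫ s in (0 : ℝ)..t, f s

@[simp]
lemma halfMulSubIntegral_zero (f : ℝ → ℝ) : halfMulSubIntegral f 0 = 0 := by
  simp [halfMulSubIntegral]

lemma halfMulSubIntegral_neg_comp_neg (f : ℝ → ℝ) (t : ℝ) :
    halfMulSubIntegral (fun u => -f (-u)) t = halfMulSubIntegral f (-t) := by
  rw [halfMulSubIntegral, halfMulSubIntegral, intervalIntegral.integral_neg, integral_comp_neg,
    neg_zero, integral_symm, neg_neg]
  ring

lemma monotoneOn_neg_comp_neg_div {f : ℝ → ℝ}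
    (hanti : AntitoneOn (fun t => f t / t) (Iio 0)) :
    MonotoneOn (fun t => -f (-t) / t) (Ioi 0) := by
  intro u hu v hv huv
  have key := hanti (mem_Iio.mpr (neg_lt_zero.mpr (mem_Ioi.mp hv)))
    (mem_Iio.mpr (neg_lt_zero.mpr (mem_Ioi.mp hu))) (neg_le_neg huv)
  simp only [div_neg, neg_div] at key ⊢
  exact key

lemma le_div_mul_of_monotoneOn {f : ℝ → ℝ} (hmono : MonotoneOn (fun t => f t / t) (Ioi 0))
    {u t : ℝ} (hu : 0 < u) (hut : u ≤ t) : f u ≤ f t / t * u := by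
  have hquot : f u / u ≤ f t / t := hmono hu (hu.trans_le hut) hut
  calc f u = f u / u * u := (div_mul_cancel₀ _ hu.ne').symm
    _ ≤ f t / t * u := mul_le_mul_of_nonneg_right hquot hu.le

lemma intervalIntegral_le_of_le_const_mul {f : ℝ → ℝ} {s t c : ℝ}
    (hf : IntervalIntegrable f volume s t) (hst : s ≤ t) (hle : ∀ u ∈ Ioo s t, f u ≤ c * u) :
    ∫ u in s..t, f u ≤ c * ((t ^ 2 - s ^ 2) / 2) := by
  have hlin : IntervalIntegrable (fun u => c * u) volume s t :=
    (continuous_const.mul continuous_id).intervalIntegrable s t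
  calc ∫ u in s..t, f u ≤ ∫ u in s..t, c * u := integral_mono_on_of_le_Ioo hst hf hlin hle
    _ = c * ((t ^ 2 - s ^ 2) / 2) := by rw [intervalIntegral.integral_const_mul, integral_id]

lemma halfMulSubIntegral_le_of_nonneg {f : ℝ → ℝ} (hf : Continuous f)
    (hmono : MonotoneOn (fun t => f t / t) (Ioi 0)) {s t : ℝ} (hs : 0 ≤ s) (hst : s ≤ t) :
    halfMulSubIntegral f s ≤ halfMulSubIntegral f t := by
  rcases (hs.trans hst).eq_or_lt with rfl | ht
  · rw [le_antisymm hst hs]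
  set c := f t / t
  have hft : f t * t = c * t ^ 2 := by
    rw [sq, ← mul_assoc, div_mul_cancel₀ _ ht.ne']
  have hfs : f s * s ≤ c * s ^ 2 := by
    rcases hs.eq_or_lt with rfl | hs'
    · simp
    rw [sq, ← mul_assoc]
    exact mul_le_mul_of_nonneg_right (le_div_mul_of_monotoneOn hmono hs' hst) hs
  have hint : ∫ u in s..t, f u ≤ c * ((t ^ 2 - s ^ 2) / 2) :=
    intervalIntegral_le_of_le_const_mul (hf.intervalIntegrable s t) hst fun u hu =>
      le_div_mul_of_monotoneOn hmono (hs.trans_lt hu.1) hu.2.le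
  have hsplit : ∫ u in (0 : ℝ)..t, f u = (∫ u in (0 : ℝ)..s, f u) + ∫ u in s..t, f u :=
    (integral_add_adjacent_intervals (hf.intervalIntegrable 0 s) (hf.intervalIntegrable s t)).symm
  simp only [halfMulSubIntegral, hsplit]
  linarith

lemma halfMulSubIntegral_le_of_nonpos {f : ℝ → ℝ} (hf : Continuous f)
    (hanti : AntitoneOn (fun t => f t / t) (Iio 0)) {s t : ℝ} (hts : t ≤ s) (hs : s ≤ 0) :
    halfMulSubIntegral f s ≤ halfMulSubIntegral f t := by
  have hrefl := halfMulSubIntegral_le_of_nonneg (f := fun u => -f (-u)) (by fun_prop)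
    (monotoneOn_neg_comp_neg_div hanti) (neg_nonneg.mpr hs) (neg_le_neg hts)
  simpa only [halfMulSubIntegral_neg_comp_neg, neg_neg] using hrefl

/-- under (f₃), `t ↦ (1/2) f(t) t − F(t)` is nonnegative and
nondecreasing in `|t|`. -/
theorem stmt_12 (f : ℝ → ℝ) (hf : Continuous f)
    (hmono : MonotoneOn (fun t => f t / t) (Set.Ioi (0 : ℝ)))
    (hanti : AntitoneOn (fun t => f t / t) (Set.Iio (0 : ℝ)))
    (F : ℝ → ℝ) (hF : ∀ t, F t = ∫ s in (0 : ℝ)..t, f s) :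
    (∀ t : ℝ, 0 ≤ (1 / 2) * (f t * t) - F t) ∧
    (∀ s t : ℝ, 0 ≤ s → s ≤ t →
      (1 / 2) * (f s * s) - F s ≤ (1 / 2) * (f t * t) - F t) ∧
    (∀ s t : ℝ, t ≤ s → s ≤ 0 →
      (1 / 2) * (f s * s) - F s ≤ (1 / 2) * (f t * t) - F t) := by
  have hΦ : ∀ t, 1 / 2 * (f t * t) - F t = halfMulSubIntegral f t := fun t => by
    rw [hF, halfMulSubIntegral]
  simp only [hΦ]
  refine ⟨fun t => ?_, fun s t => halfMulSubIntegral_le_of_nonneg hf hmono,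
    fun s t => halfMulSubIntegral_le_of_nonpos hf hanti⟩
  rw [← halfMulSubIntegral_zero f]
  rcases le_total 0 t with ht | ht
  · exact halfMulSubIntegral_le_of_nonneg hf hmono le_rfl ht
  · exact halfMulSubIntegral_le_of_nonpos hf hanti ht le_rfl
end
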